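/- arXiv:1804.02787 — 4 statements merged into one kernel-verified Lean document; each statement's English description precedes it below -/
import Mathlib

section
/- Theorem 1: Let a countably additive transition function p on a measurable space (X,Σ) be given, with Markov operator A on ba(X,Σ). Suppose the set Δ_ba of invariant finitely additive probability measures satisfies dim span(Δ_ba) = n < ∞ and Δ_ba is the convex hull of measures μ₁,…,μₙ that are pairwise singular (for i ≠ j there exist disjoint Kᵢ,Kⱼ ∈ Σ with μᵢ(Kᵢ) = μⱼ(Kⱼ) = 1), and each μᵢ satisfies condition (α). Then every invariant finitely additive probability measure is countably additive, i.e. Δ_ba ⊂ ca(X,Σ). -/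
open MeasureTheory Set Filter Topology Function

/-- A bounded finitely additive (signed) set function on the σ-algebra. -/
def IsFinAdd {X : Type*} [MeasurableSpace X] (μ : Set X → ℝ) : Prop :=
  μ ∅ = 0 ∧ ∀ E F : Set X, MeasurableSet E → MeasurableSet F → Disjoint E F →
    μ (E ∪ F) = μ E + μ F

/-- Nonnegativity on measurable sets. -/
def IsNonnegSF {X : Type*} [MeasurableSpace X] (μ : Set X → ℝ) : Prop :=
  ∀ E : Set X, MeasurableSet E → 0 ≤ μ E

/-- Countable additivity on the σ-algebra. -/
def IsCtblAdd {X : Type*} [MeasurableSpace X] (μ : Set X → ℝ) : Prop :=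
  ∀ E : ℕ → Set X, (∀ n, MeasurableSet (E n)) → Pairwise (Disjoint on E) →
    HasSum (fun n => μ (E n)) (μ (⋃ n, E n))

/-- A nonnegative finitely additive measure is purely finitely additive if the only
countably additive measure `lam` with `0 ≤ lam ≤ μ` is `lam = 0`. -/
def IsPurelyFinAdd {X : Type*} [MeasurableSpace X] (μ : Set X → ℝ) : Prop :=
  ∀ lam : Set X → ℝ, IsFinAdd lam → IsCtblAdd lam →
    (∀ E, MeasurableSet E → 0 ≤ lam E) → (∀ E, MeasurableSet E → lam E ≤ μ E) →
    ∀ E, MeasurableSet E → lam E = 0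

/-- A countably additive transition function (transition probability). -/
def IsTransFun {X : Type*} [MeasurableSpace X] (p : X → Set X → ℝ) : Prop :=
  (∀ (x : X) (E : Set X), MeasurableSet E → 0 ≤ p x E ∧ p x E ≤ 1) ∧
  (∀ x : X, p x Set.univ = 1) ∧
  (∀ E : Set X, MeasurableSet E → Measurable fun x => p x E) ∧
  (∀ x : X, IsFinAdd (p x) ∧ IsCtblAdd (p x))

/-- The integral of a bounded measurable function with respect to a (finitely additive)
set function, defined by the layer-cake formula. -/
noncomputable def faIntegral {X : Type*} [MeasurableSpace X] (μ : Set X → ℝ) (f : X → ℝ) : ℝ :=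
  (∫ t in Set.Ioi (0:ℝ), μ {x | t < f x}) - (∫ t in Set.Ioi (0:ℝ), μ {x | f x < -t})

/-- The Markov operator `A` on finitely additive measures: `(Aμ)(E) = ∫ p(x,E) μ(dx)`. -/
noncomputable def markovOp {X : Type*} [MeasurableSpace X] (p : X → Set X → ℝ)
    (μ : Set X → ℝ) : Set X → ℝ :=
  fun E => faIntegral μ fun x => p x E

/-- `Δ_ba`: the set of invariant finitely additive probability measures. -/
def InvProbSet {X : Type*} [MeasurableSpace X] (p : X → Set X → ℝ) : Set (Set X → ℝ) :=
  {μ | IsFinAdd μ ∧ IsNonnegSF μ ∧ μ Set.univ = 1 ∧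
    ∀ E : Set X, MeasurableSet E → markovOp p μ E = μ E}

/-!
Fix `i`. The singular pairs give the `μ j` pairwise disjoint supports `S j`, and condition (α)
gives a nonempty absorbing set `K ⊆ S i` of full `μ i`-measure. An invariant finitely additive
probability charging `K` vanishes on every other `S j`, so, being a convex combination of the
`μ j`, it is `μ i`. Start the chain at a point of `K`: the Cesàro averages of its distributions
are countably additive, concentrated on `K` and asymptotically invariant, so every ultrafilter
limit of them is invariant (the layer-cake integral passes to the limit through uniform Riemann
sums) and therefore equals `μ i`. Thus the averages converge setwise to `μ i`, which is countably
additive by the Vitali–Hahn–Saks theorem (Baire's theorem on the complete space of measurable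
sets modulo a dominating measure). Countable additivity survives convex combinations.
-/

open scoped ENNReal symmDiff

section FinAddProb

variable {X : Type*} [MeasurableSpace X] {ν : Set X → ℝ}

structure IsFinAddProb (ν : Set X → ℝ) : Prop where
  finAdd : IsFinAdd ν
  nonneg : IsNonnegSF ν
  univ_eq_one : ν univ = 1

lemma isFinAddProb_of_mem_invProbSet {p : X → Set X → ℝ} (hν : ν ∈ InvProbSet p) :
    IsFinAddProb ν :=
  ⟨hν.1, hν.2.1, hν.2.2.1⟩

lemma isFinAddProb_measureReal (σ : Measure X) [IsProbabilityMeasure σ] :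
    IsFinAddProb σ.real where
  finAdd := ⟨measureReal_empty, fun _ _ _ hF hEF => measureReal_union hEF hF⟩
  nonneg _ _ := measureReal_nonneg
  univ_eq_one := probReal_univ

lemma IsFinAdd.eq_add_diff (hν : IsFinAdd ν) {A B : Set X} (hA : MeasurableSet A)
    (hB : MeasurableSet B) (hBA : B ⊆ A) : ν A = ν B + ν (A \ B) := by
  rw [← hν.2 B (A \ B) hB (hA.diff hB) disjoint_sdiff_self_right, union_sdiff_cancel hBA]

lemma IsFinAdd.apply_biUnion_range (hν : IsFinAdd ν) {E : ℕ → Set X}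
    (hE : ∀ k, MeasurableSet (E k)) (hd : Pairwise (Disjoint on E)) (N : ℕ) :
    ν (⋃ k ∈ Finset.range N, E k) = ∑ k ∈ Finset.range N, ν (E k) := by
  induction N with
  | zero => simpa using hν.1
  | succ N ih =>
    have hdisj : Disjoint (⋃ k ∈ Finset.range N, E k) (E N) := by
      simp only [disjoint_iUnion_left, Finset.mem_range]
      exact fun k hk => hd hk.ne
    rw [Finset.sum_range_succ, ← ih, Finset.range_add_one, Finset.set_biUnion_insert, union_comm,
      hν.2 _ _ (Finset.measurableSet_biUnion _ fun k _ => hE k) (hE N) hdisj]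

namespace IsFinAddProb

lemma mono (hν : IsFinAddProb ν) {A B : Set X} (hA : MeasurableSet A) (hB : MeasurableSet B)
    (hAB : A ⊆ B) : ν A ≤ ν B := by
  rw [hν.finAdd.eq_add_diff hB hA hAB]
  linarith [hν.nonneg _ (hB.diff hA)]

lemma le_one (hν : IsFinAddProb ν) {A : Set X} (hA : MeasurableSet A) : ν A ≤ 1 :=
  hν.univ_eq_one ▸ hν.mono hA MeasurableSet.univ (subset_univ A)

lemma apply_eq_zero_of_disjoint (hν : IsFinAddProb ν) {A B : Set X} (hA : MeasurableSet A)
    (hB : MeasurableSet B) (hA1 : ν A = 1) (hBA : Disjoint B A) : ν B = 0 := by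
  have hsplit := hν.finAdd.eq_add_diff MeasurableSet.univ hA (subset_univ A)
  have hle := hν.mono hB (MeasurableSet.univ.diff hA) fun x hx =>
    ⟨trivial, hBA.notMem_of_mem_left hx⟩
  linarith [hν.nonneg B hB, hν.univ_eq_one]

lemma nonempty_of_eq_one (hν : IsFinAddProb ν) {A : Set X} (hA1 : ν A = 1) : A.Nonempty := by
  rw [nonempty_iff_ne_empty]
  rintro rfl
  linarith [hν.finAdd.1]

lemma inter_eq_one (hν : IsFinAddProb ν) {A B : Set X} (hA : MeasurableSet A)
    (hB : MeasurableSet B) (hA1 : ν A = 1) (hB1 : ν B = 1) : ν (A ∩ B) = 1 := by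
  have hrest := hν.apply_eq_zero_of_disjoint hA (hB.diff (hA.inter hB)) hA1
    (disjoint_left.2 fun x hx hxA => hx.2 ⟨hxA, hx.1⟩)
  linarith [hν.finAdd.eq_add_diff hB (hA.inter hB) inter_subset_right]

lemma biInter_eq_one (hν : IsFinAddProb ν) {ι : Type*} (s : Finset ι) {T : ι → Set X}
    (hT : ∀ j ∈ s, MeasurableSet (T j)) (hT1 : ∀ j ∈ s, ν (T j) = 1) : ν (⋂ j ∈ s, T j) = 1 := by
  classical
  induction s using Finset.induction with
  | empty => simpa using hν.univ_eq_one
  | insert a s ha ih =>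
    rw [Finset.set_biInter_insert]
    exact hν.inter_eq_one (hT a (s.mem_insert_self a))
      (Finset.measurableSet_biInter s fun j hj => hT j (Finset.mem_insert_of_mem hj))
      (hT1 a (s.mem_insert_self a))
      (ih (fun j hj => hT j (Finset.mem_insert_of_mem hj))
        fun j hj => hT1 j (Finset.mem_insert_of_mem hj))

end IsFinAddProb

lemma IsFinAddProb.of_tendsto {ι : Type*} {l : Filter ι} [l.NeBot] {ν : ι → Set X → ℝ}
    {ν₀ : Set X → ℝ} (hν : ∀ i, IsFinAddProb (ν i))
    (hlim : ∀ E, MeasurableSet E → Tendsto (fun i => ν i E) l (𝓝 (ν₀ E))) :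
    IsFinAddProb ν₀ where
  finAdd := by
    refine ⟨tendsto_nhds_unique (hlim ∅ MeasurableSet.empty) ?_, fun E F hE hF hEF => ?_⟩
    · simpa only [(hν _).finAdd.1] using tendsto_const_nhds
    · refine tendsto_nhds_unique (hlim _ (hE.union hF)) ?_
      simpa only [(hν _).finAdd.2 E F hE hF hEF] using (hlim E hE).add (hlim F hF)
  nonneg E hE := ge_of_tendsto' (hlim E hE) fun i => (hν i).nonneg E hE
  univ_eq_one := tendsto_nhds_unique (hlim _ MeasurableSet.univ)
    (by simpa only [(hν _).univ_eq_one] using tendsto_const_nhds)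

end FinAddProb

section LayerCake

def layerProfiles : Set (ℝ → ℝ) :=
  {h | Antitone h ∧ (∀ t, h t ∈ Icc (0 : ℝ) 1) ∧ ∀ t, 1 ≤ t → h t = 0}

lemma integral_Ioi_eq_intervalIntegral_of_mem_layerProfiles {h : ℝ → ℝ} (hh : h ∈ layerProfiles) :
    ∫ t in Ioi (0 : ℝ), h t = ∫ t in (0 : ℝ)..1, h t := by
  have hzero : ∀ t ∈ Ioi (1 : ℝ), h t = 0 := fun t ht => hh.2.2 t (le_of_lt ht)
  rw [intervalIntegral.integral_of_le zero_le_one, ← Ioc_union_Ioi_eq_Ioi zero_le_one,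
    setIntegral_union (Ioc_disjoint_Ioi le_rfl) measurableSet_Ioi
      (hh.1.intervalIntegrable.1) ((integrableOn_zero).congr_fun (fun t ht => (hzero t ht).symm)
      measurableSet_Ioi), setIntegral_congr_fun measurableSet_Ioi hzero, integral_zero, add_zero]

lemma abs_integral_Ioi_sub_riemannSum_le {h : ℝ → ℝ} (hh : h ∈ layerProfiles) {R : ℕ}
    (hR : 0 < R) :
    |(∫ t in Ioi (0 : ℝ), h t) - (∑ r ∈ Finset.range R, h (r / R)) / R| ≤ 1 / R := by
  have hR' : (0 : ℝ) < R := Nat.cast_pos.2 hR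
  set f : ℝ → ℝ := fun s => h (s / R)
  have hf : AntitoneOn f (Icc 0 (0 + R)) := fun a _ b _ hab =>
    hh.1 (div_le_div_of_nonneg_right hab hR'.le)
  have hscale : ∫ s in (0 : ℝ)..R, f s = R * ∫ t in Ioi (0 : ℝ), h t := by
    rw [integral_Ioi_eq_intervalIntegral_of_mem_layerProfiles hh,
      intervalIntegral.integral_comp_div h hR'.ne',
      zero_div, div_self hR'.ne', smul_eq_mul]
  have hupper := hf.integral_le_sum
  have hlower := hf.sum_le_integral
  have hshift : ∑ i ∈ Finset.range R, f ↑(i + 1) = ∑ i ∈ Finset.range R, f i + h 1 - h 0 := by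
    have := Finset.sum_range_sub (fun i => f i) R
    simp only [Finset.sum_sub_distrib, Nat.cast_zero, f, div_self hR'.ne', zero_div] at this ⊢
    linarith
  simp only [zero_add, hscale, hshift] at hupper hlower
  simp only [f] at hupper hlower
  have h0 := (hh.2.1 0).2
  have h1 := (hh.2.1 1).1
  have hkey : |R * (∫ t in Ioi (0 : ℝ), h t) - ∑ r ∈ Finset.range R, h (r / R)| ≤ 1 := by
    rw [abs_le]; constructor <;> linarith
  calc _ = |(R * (∫ t in Ioi (0 : ℝ), h t) - ∑ r ∈ Finset.range R, h (r / R)) / R| := by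
        rw [sub_div, mul_div_cancel_left₀ _ hR'.ne']
    _ = |R * (∫ t in Ioi (0 : ℝ), h t) - ∑ r ∈ Finset.range R, h (r / R)| / R := by
        rw [abs_div, abs_of_pos hR']
    _ ≤ 1 / R := by gcongr

-- Dominated convergence needs countably generated filters; uniform convergence of Riemann sums
-- gives continuity for the product topology, i.e. along arbitrary filters.
lemma continuousOn_integral_Ioi_layerProfiles :
    ContinuousOn (fun h : ℝ → ℝ => ∫ t in Ioi (0 : ℝ), h t) layerProfiles := by
  refine TendstoUniformlyOn.continuousOn (p := atTop)
    (F := fun (R : ℕ) (h : ℝ → ℝ) => (∑ r ∈ Finset.range R, h (r / R)) / R) ?_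
    (Frequently.of_forall fun R => Continuous.continuousOn (by fun_prop))
  rw [Metric.tendstoUniformlyOn_iff]
  intro ε hε
  obtain ⟨N, hN⟩ := exists_nat_gt (1 / ε)
  filter_upwards [eventually_gt_atTop N] with R hR h hh
  have hRε : 1 / ε < R := hN.trans (Nat.cast_lt.2 hR)
  calc dist _ _ ≤ 1 / R := abs_integral_Ioi_sub_riemannSum_le hh (by omega)
    _ < ε := by rwa [div_lt_comm₀ (by exact_mod_cast (Nat.zero_le N).trans_lt hR) hε]

variable {X : Type*} [MeasurableSpace X] {ν : Set X → ℝ} {f : X → ℝ}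

lemma IsFinAddProb.profile_mem_layerProfiles (hν : IsFinAddProb ν) (hf : Measurable f)
    (hf1 : ∀ x, f x ≤ 1) : (fun t => ν {x | t < f x}) ∈ layerProfiles := by
  have hmeas : ∀ t : ℝ, MeasurableSet {x | t < f x} := fun t => measurableSet_lt measurable_const hf
  refine ⟨fun t t' htt' => hν.mono (hmeas t') (hmeas t) fun x hx => htt'.trans_lt hx,
    fun t => ⟨hν.nonneg _ (hmeas t), hν.le_one (hmeas t)⟩, fun t ht => ?_⟩
  have hempty : {x | t < f x} = ∅ := eq_empty_of_forall_notMem fun x hx => by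
    linarith [hf1 x, show t < f x from hx]
  simp only [hempty, hν.finAdd.1]

lemma faIntegral_eq_integral_Ioi (hν : ν ∅ = 0) (hf0 : ∀ x, 0 ≤ f x) :
    faIntegral ν f = ∫ t in Ioi (0 : ℝ), ν {x | t < f x} := by
  have hneg : ∀ t ∈ Ioi (0 : ℝ), ν {x | f x < -t} = 0 := fun t ht => by
    have hempty : {x | f x < -t} = ∅ := eq_empty_of_forall_notMem fun x hx => by
      linarith [hf0 x, show f x < -t from hx, show (0 : ℝ) < t from ht]
    rw [hempty, hν]
  rw [faIntegral, setIntegral_congr_fun measurableSet_Ioi hneg, integral_zero, sub_zero]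

lemma faIntegral_measureReal (σ : Measure X) [IsFiniteMeasure σ] (hf : Measurable f)
    (hf0 : ∀ x, 0 ≤ f x) (hf1 : ∀ x, f x ≤ 1) : faIntegral σ.real f = ∫ x, f x ∂σ := by
  have hint : Integrable f σ :=
    Integrable.of_mem_Icc 0 1 hf.aemeasurable (ae_of_all _ fun x => ⟨hf0 x, hf1 x⟩)
  rw [faIntegral_eq_integral_Ioi measureReal_empty hf0,
    hint.integral_eq_integral_meas_lt (Eventually.of_forall hf0)]

lemma tendsto_faIntegral {ι : Type*} {l : Filter ι} {ν : ι → Set X → ℝ} {ν₀ : Set X → ℝ}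
    (hν : ∀ i, IsFinAddProb (ν i)) (hν₀ : IsFinAddProb ν₀) (hf : Measurable f)
    (hf0 : ∀ x, 0 ≤ f x) (hf1 : ∀ x, f x ≤ 1)
    (hlim : ∀ E, MeasurableSet E → Tendsto (fun i => ν i E) l (𝓝 (ν₀ E))) :
    Tendsto (fun i => faIntegral (ν i) f) l (𝓝 (faIntegral ν₀ f)) := by
  simp only [faIntegral_eq_integral_Ioi (hν _).finAdd.1 hf0,
    faIntegral_eq_integral_Ioi hν₀.finAdd.1 hf0]
  refine ((continuousOn_integral_Ioi_layerProfiles _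
    (hν₀.profile_mem_layerProfiles hf hf1)).tendsto).comp (tendsto_nhdsWithin_iff.2 ⟨?_, ?_⟩)
  · exact tendsto_pi_nhds.2 fun t => hlim _ (measurableSet_lt measurable_const hf)
  · exact Eventually.of_forall fun i => (hν i).profile_mem_layerProfiles hf hf1

end LayerCake

section VitaliHahnSaks

lemma symmDiff_limsup_subset {α : Type*} (u : ℕ → Set α) (j : ℕ) :
    u j ∆ limsup u atTop ⊆ ⋃ d, u (d + j) ∆ u (d + j + 1) := by
  intro x hx
  by_contra hcon
  simp only [mem_iUnion, not_exists, mem_symmDiff, not_or, not_and, not_not] at hcon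
  have hconst : ∀ d, x ∈ u (d + j) ↔ x ∈ u j := by
    intro d
    induction d with
    | zero => simp
    | succ d ih => rw [← ih, add_right_comm]; exact ⟨(hcon d).2, (hcon d).1⟩
  have hlim : x ∈ limsup u atTop ↔ x ∈ u j := by
    rw [mem_limsup_iff_frequently_mem, ← frequently_const (f := (atTop : Filter ℕ)) (p := x ∈ u j)]
    refine frequently_congr ((eventually_ge_atTop j).mono fun n hn => ?_)
    obtain ⟨d, rfl⟩ := Nat.exists_eq_add_of_le' hn
    exact hconst d
  rcases mem_symmDiff.1 hx with h | h <;> tauto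

variable {X : Type*} [MeasurableSpace X]

instance MeasureTheory.MeasuredSets.completeSpace (Λ : Measure X) :
    CompleteSpace (MeasuredSets Λ) := by
  refine EMetric.complete_of_convergent_controlled_sequences (fun n => 2⁻¹ ^ n)
    (fun n => ENNReal.pow_pos (by norm_num) n) fun u hu => ?_
  set a : ℕ → ℝ≥0∞ := fun r => Λ ((u r : Set X) ∆ u (r + 1))
  have ha : ∑' r, a r ≠ ∞ := by
    refine ne_top_of_le_ne_top ?_ (ENNReal.tsum_le_tsum fun r => (hu r r (r + 1) le_rfl
      (Nat.le_succ r)).le)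
    simp [ENNReal.tsum_geometric]
  refine ⟨⟨limsup (fun n => (u n : Set X)) atTop,
    MeasurableSet.measurableSet_limsup fun n => (u n).2⟩, ?_⟩
  refine tendsto_iff_edist_tendsto_0.2 (tendsto_of_tendsto_of_tendsto_of_le_of_le
    tendsto_const_nhds (ENNReal.tendsto_sum_nat_add a ha) (fun _ => zero_le) fun j => ?_)
  calc Λ ((u j : Set X) ∆ limsup (fun n => (u n : Set X)) atTop)
      ≤ Λ (⋃ d, (u (d + j) : Set X) ∆ u (d + j + 1)) :=
        measure_mono (symmDiff_limsup_subset (fun n => (u n : Set X)) j)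
    _ ≤ ∑' d, a (d + j) := measure_iUnion_le _

lemma MeasureTheory.Measure.AbsolutelyContinuous.exists_pos_forall_lt {σ Λ : Measure X}
    [IsFiniteMeasure σ] [IsFiniteMeasure Λ] (h : σ ≪ Λ) {ε : ℝ≥0∞} (hε : ε ≠ 0) :
    ∃ δ > 0, ∀ s, Λ s < δ → σ s < ε := by
  obtain ⟨δ, hδ, hδε⟩ := exists_pos_setLIntegral_lt_of_measure_lt
    ((Measure.lintegral_rnDeriv_le).trans_lt (measure_lt_top σ univ)).ne hε
  refine ⟨δ, hδ, fun s hs => ?_⟩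
  rw [← Measure.withDensity_rnDeriv_eq σ Λ h, withDensity_apply']
  exact hδε s hs

lemma continuous_measureReal_measuredSets {σ Λ : Measure X} [IsFiniteMeasure σ]
    [IsFiniteMeasure Λ] (h : σ ≪ Λ) : Continuous fun s : MeasuredSets Λ => σ.real s := by
  refine continuous_iff_continuousAt.2 fun s => ?_
  rw [ContinuousAt, (Metric.nhds_basis_eball).tendsto_iff Metric.nhds_basis_ball]
  intro ε hε
  obtain ⟨δ, hδ, hδε⟩ := h.exists_pos_forall_lt (ENNReal.ofReal_pos.2 hε).ne'
  refine ⟨δ, hδ, fun t ht => ?_⟩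
  calc dist (σ.real t) (σ.real s) ≤ σ.real ((t : Set X) ∆ s) :=
        abs_measureReal_sub_le_measureReal_symmDiff t.2.nullMeasurableSet s.2.nullMeasurableSet
    _ < ε := ENNReal.toReal_lt_of_lt_ofReal (hδε _ ht)

lemma exists_eball_forall_abs_sub_le {Λ : Measure X} [IsFiniteMeasure Λ] {σ : ℕ → Measure X}
    [∀ m, IsFiniteMeasure (σ m)] (habs : ∀ m, σ m ≪ Λ)
    (hcauchy : ∀ E, MeasurableSet E → CauchySeq fun m => (σ m).real E) {ε : ℝ} (hε : 0 < ε) :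
    ∃ K, ∃ s : MeasuredSets Λ, ∃ r > 0, ∀ t ∈ Metric.eball s r, ∀ m ≥ K,
      |(σ m).real t - (σ K).real t| ≤ ε := by
  have : Nonempty (MeasuredSets Λ) := ⟨⟨∅, MeasurableSet.empty⟩⟩
  set F : ℕ → Set (MeasuredSets Λ) := fun K => ⋂ m ≥ K, {t | |(σ m).real t - (σ K).real t| ≤ ε}
  have hclosed : ∀ K, IsClosed (F K) := fun K => isClosed_biInter fun m _ =>
    isClosed_le (((continuous_measureReal_measuredSets (habs m)).sub
      (continuous_measureReal_measuredSets (habs K))).abs) continuous_const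
  have hcover : ⋃ K, F K = univ := eq_univ_of_forall fun t => by
    obtain ⟨N, hN⟩ := Metric.cauchySeq_iff'.1 (hcauchy t t.2) ε hε
    exact mem_iUnion.2 ⟨N, mem_iInter₂.2 fun m hm => (hN m hm).le⟩
  obtain ⟨K, s, hs⟩ := nonempty_interior_of_iUnion_of_closed hclosed hcover
  obtain ⟨r, hr, hball⟩ := EMetric.mem_nhds_iff.1 (mem_interior_iff_mem_nhds.1 hs)
  exact ⟨K, s, r, hr, fun t ht m hm => mem_iInter₂.1 (hball ht) m hm⟩

lemma exists_pos_forall_le_of_tendsto {Λ : Measure X} [IsFiniteMeasure Λ] {σ : ℕ → Measure X}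
    [∀ m, IsFiniteMeasure (σ m)] (habs : ∀ m, σ m ≪ Λ) {μ₀ : Set X → ℝ}
    (hlim : ∀ E, MeasurableSet E → Tendsto (fun m => (σ m).real E) atTop (𝓝 (μ₀ E)))
    {ε : ℝ} (hε : 0 < ε) : ∃ δ > 0, ∀ S, MeasurableSet S → Λ S < δ → μ₀ S ≤ ε := by
  obtain ⟨K, s, r, hr, hball⟩ := exists_eball_forall_abs_sub_le habs
    (fun E hE => (hlim E hE).cauchySeq) (by positivity : 0 < ε / 3)
  obtain ⟨δ, hδ, hδε⟩ := (habs K).exists_pos_forall_lt (ENNReal.ofReal_pos.2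
    (by positivity : 0 < ε / 3)).ne'
  refine ⟨min r δ, lt_min hr hδ, fun S hS hΛS => ?_⟩
  have hnear : ∀ t : MeasuredSets Λ, (t : Set X) ∆ s ⊆ S → t ∈ Metric.eball s r :=
    fun t hts => (measure_mono hts).trans_lt (hΛS.trans_le (min_le_left r δ))
  -- `S = (s ∪ S) \ (s \ S)`, both sets near `s`, where all `σ m` with `m ≥ K` are close.
  set A₁ : MeasuredSets Λ := ⟨s ∪ S, s.2.union hS⟩
  set A₂ : MeasuredSets Λ := ⟨s \ S, s.2.diff hS⟩
  have hA₁ : (A₁ : Set X) = (s : Set X) ∪ S := rfl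
  have hA₂ : (A₂ : Set X) = (s : Set X) \ S := rfl
  have h₁ := hball A₁ (hnear A₁ fun x hx => by
    simp only [hA₁, mem_symmDiff, mem_union] at hx; tauto)
  have h₂ := hball A₂ (hnear A₂ fun x hx => by
    simp only [hA₂, mem_symmDiff, Set.mem_sdiff] at hx; tauto)
  have hK : (σ K).real S < ε / 3 :=
    ENNReal.toReal_lt_of_lt_ofReal (hδε S (hΛS.trans_le (min_le_right r δ)))
  have hsplit : ∀ m, (σ m).real S = (σ m).real A₁ - (σ m).real A₂ := fun m => by
    rw [hA₁, hA₂, ← sdiff_union_self, measureReal_union disjoint_sdiff_self_left hS]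
    ring
  refine le_of_tendsto (hlim S hS) (eventually_atTop.2 ⟨K, fun m hm => ?_⟩)
  have e₁ := abs_le.1 (h₁ m hm)
  have e₂ := abs_le.1 (h₂ m hm)
  linarith [hsplit m, hsplit K]

lemma isCtblAdd_of_forall_measure_lt {ν : Set X → ℝ} (hfa : IsFinAdd ν) (hnn : IsNonnegSF ν)
    (Λ : Measure X) [IsFiniteMeasure Λ]
    (hac : ∀ ε > 0, ∃ δ > 0, ∀ S, MeasurableSet S → Λ S < δ → ν S ≤ ε) : IsCtblAdd ν := by
  intro E hE hd
  have htail_meas : ∀ N, MeasurableSet (⋃ k ≥ N, E k) := fun N =>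
    MeasurableSet.biUnion (to_countable _) fun k _ => hE k
  have hsplit : ∀ N, ν (⋃ k, E k) = ∑ k ∈ Finset.range N, ν (E k) + ν (⋃ k ≥ N, E k) := by
    intro N
    have hunion : ⋃ k, E k = (⋃ k ∈ Finset.range N, E k) ∪ ⋃ k ≥ N, E k := by
      ext x; simp only [mem_iUnion, mem_union, Finset.mem_range]
      exact ⟨fun ⟨k, hk⟩ => (lt_or_ge k N).imp (fun h => ⟨k, h, hk⟩) fun h => ⟨k, h, hk⟩,
        by rintro (⟨k, -, hk⟩ | ⟨k, -, hk⟩) <;> exact ⟨k, hk⟩⟩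
    have hdisj : Disjoint (⋃ k ∈ Finset.range N, E k) (⋃ k ≥ N, E k) := by
      simp only [disjoint_iUnion_left, disjoint_iUnion_right, Finset.mem_range]
      exact fun k hk l hl => hd (by omega)
    rw [hunion, hfa.2 _ _ (Finset.measurableSet_biUnion _ fun k _ => hE k) (htail_meas N) hdisj,
      hfa.apply_biUnion_range hE hd]
  have htail : Tendsto (fun N => ν (⋃ k ≥ N, E k)) atTop (𝓝 0) := by
    have hΛ := tendsto_measure_biUnion_Ici_zero_of_pairwise_disjoint (μ := Λ)
      (fun k => (hE k).nullMeasurableSet) hd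
    refine Metric.tendsto_nhds.2 fun ε hε => ?_
    obtain ⟨δ, hδ, hδε⟩ := hac (ε / 2) (half_pos hε)
    filter_upwards [hΛ.eventually (gt_mem_nhds hδ)] with N hN
    rw [Real.dist_eq, sub_zero, abs_of_nonneg (hnn _ (htail_meas N))]
    linarith [hδε _ (htail_meas N) hN]
  rw [hasSum_iff_tendsto_nat_of_nonneg fun k => hnn _ (hE k)]
  simpa [fun N => eq_sub_of_add_eq (hsplit N).symm] using tendsto_const_nhds.sub htail

theorem isCtblAdd_of_tendsto_measureReal {σ : ℕ → Measure X} [∀ m, IsProbabilityMeasure (σ m)]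
    {μ₀ : Set X → ℝ}
    (hlim : ∀ E, MeasurableSet E → Tendsto (fun m => (σ m).real E) atTop (𝓝 (μ₀ E))) :
    IsCtblAdd μ₀ := by
  have hμ₀ := IsFinAddProb.of_tendsto (fun m => isFinAddProb_measureReal (σ m)) hlim
  set Λ : Measure X := Measure.sum fun m => (2⁻¹ : ℝ≥0∞) ^ (m + 1) • σ m
  have : IsFiniteMeasure Λ := ⟨by
    simp [Λ, Measure.sum_apply _ MeasurableSet.univ, ENNReal.tsum_geometric_add_one,
      ENNReal.inv_mul_cancel]⟩
  have habs : ∀ m, σ m ≪ Λ := fun m => (Measure.absolutelyContinuous_smul (by simp)).trans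
    (Measure.absolutelyContinuous_sum_right m Measure.AbsolutelyContinuous.rfl)
  exact isCtblAdd_of_forall_measure_lt hμ₀.finAdd hμ₀.nonneg Λ fun ε hε =>
    exists_pos_forall_le_of_tendsto habs hlim hε

end VitaliHahnSaks

section TransitionKernel

open ProbabilityTheory

variable {X : Type*} [MeasurableSpace X] {p : X → Set X → ℝ}

namespace IsTransFun

lemma nonneg (hp : IsTransFun p) (x : X) {E : Set X} (hE : MeasurableSet E) : 0 ≤ p x E :=
  (hp.1 x E hE).1

lemma le_one (hp : IsTransFun p) (x : X) {E : Set X} (hE : MeasurableSet E) : p x E ≤ 1 :=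
  (hp.1 x E hE).2

noncomputable def toKernel (hp : IsTransFun p) : Kernel X X where
  toFun x := Measure.ofMeasurable (fun s _ => ENNReal.ofReal (p x s)) (by simp [(hp.2.2.2 x).1.1])
    fun f hf hd => by
      have hsum := (hp.2.2.2 x).2 f hf hd
      rw [← hsum.tsum_eq, ENNReal.ofReal_tsum_of_nonneg (fun k => hp.nonneg x (hf k)) hsum.summable]
  measurable' := Measure.measurable_of_measurable_coe _ fun E hE => by
    simp_rw [Measure.ofMeasurable_apply E hE]
    exact (hp.2.2.1 E hE).ennreal_ofReal

lemma toKernel_apply (hp : IsTransFun p) (x : X) {E : Set X} (hE : MeasurableSet E) :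
    hp.toKernel x E = ENNReal.ofReal (p x E) := by
  simp only [toKernel, Kernel.coe_mk]
  exact Measure.ofMeasurable_apply E hE

instance isMarkovKernel_toKernel (hp : IsTransFun p) : IsMarkovKernel hp.toKernel :=
  ⟨fun x => ⟨by rw [hp.toKernel_apply x MeasurableSet.univ, hp.2.1 x, ENNReal.ofReal_one]⟩⟩

lemma integral_eq_comp_real (hp : IsTransFun p) (ρ : Measure X) {E : Set X} (hE : MeasurableSet E) :
    ∫ x, p x E ∂ρ = (hp.toKernel ∘ₘ ρ).real E := by
  rw [measureReal_def, Measure.bind_apply hE (Kernel.aemeasurable _),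
    integral_eq_lintegral_of_nonneg_ae (ae_of_all _ fun x => hp.nonneg x hE)
      (hp.2.2.1 E hE).aestronglyMeasurable]
  simp_rw [hp.toKernel_apply _ hE]

lemma markovOp_measureReal (hp : IsTransFun p) (ρ : Measure X) [IsFiniteMeasure ρ] {E : Set X}
    (hE : MeasurableSet E) : markovOp p ρ.real E = ∫ x, p x E ∂ρ :=
  faIntegral_measureReal ρ (hp.2.2.1 E hE) (fun x => hp.nonneg x hE) fun x => hp.le_one x hE

noncomputable def iterate (hp : IsTransFun p) (ρ : Measure X) (k : ℕ) : Measure X :=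
  (hp.toKernel ∘ₘ ·)^[k] ρ

lemma iterate_succ (hp : IsTransFun p) (ρ : Measure X) (k : ℕ) :
    hp.iterate ρ (k + 1) = hp.toKernel ∘ₘ hp.iterate ρ k :=
  Function.iterate_succ_apply' _ k ρ

instance isProbabilityMeasure_iterate (hp : IsTransFun p) (ρ : Measure X) [IsProbabilityMeasure ρ]
    (k : ℕ) :
    IsProbabilityMeasure (hp.iterate ρ k) := by
  induction k with
  | zero => exact ‹_›
  | succ k ih => rw [hp.iterate_succ]; infer_instance

lemma iterate_apply_eq_one (hp : IsTransFun p) {ρ : Measure X} [IsProbabilityMeasure ρ] {K : Set X}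
    (hK : MeasurableSet K) (hKabs : ∀ x ∈ K, p x K = 1) (hρK : ρ K = 1) (k : ℕ) :
    hp.iterate ρ k K = 1 := by
  induction k with
  | zero => exact hρK
  | succ k ih =>
    have hae : ∀ᵐ x ∂(hp.iterate ρ k), x ∈ K := mem_ae_iff.2 ((prob_compl_eq_zero_iff hK).2 ih)
    rw [iterate_succ, Measure.bind_apply hK (Kernel.aemeasurable _),
      lintegral_congr_ae (g := 1) (hae.mono fun x hx => by
        simp [hp.toKernel_apply x hK, hKabs x hx])]
    simp

noncomputable def cesaro (hp : IsTransFun p) (ρ : Measure X) (m : ℕ) : Measure X :=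
  ((m : ℝ≥0∞) + 1)⁻¹ • ∑ k ∈ Finset.range (m + 1), hp.iterate ρ k

instance isProbabilityMeasure_cesaro (hp : IsTransFun p) (ρ : Measure X) [IsProbabilityMeasure ρ]
    (m : ℕ) : IsProbabilityMeasure (hp.cesaro ρ m) := by
  constructor
  simp only [cesaro, Measure.smul_apply, Measure.finsetSum_apply, measure_univ, Finset.sum_const,
    Finset.card_range, nsmul_eq_mul, mul_one, smul_eq_mul, Nat.cast_add, Nat.cast_one]
  exact ENNReal.inv_mul_cancel (by simp) (by simp)

lemma cesaro_real_apply (hp : IsTransFun p) (ρ : Measure X) [IsProbabilityMeasure ρ] (m : ℕ)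
    (E : Set X) : (hp.cesaro ρ m).real E
      = ((m : ℝ) + 1)⁻¹ * ∑ k ∈ Finset.range (m + 1), (hp.iterate ρ k).real E := by
  simp [cesaro, measureReal_def, ENNReal.toReal_sum, ENNReal.toReal_inv, ENNReal.toReal_add]

lemma markovOp_cesaro_sub (hp : IsTransFun p) (ρ : Measure X) [IsProbabilityMeasure ρ] (m : ℕ)
    {E : Set X} (hE : MeasurableSet E) :
    markovOp p (hp.cesaro ρ m).real E - (hp.cesaro ρ m).real E
      = ((m : ℝ) + 1)⁻¹ * ((hp.iterate ρ (m + 1)).real E - (hp.iterate ρ 0).real E) := by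
  have hint : ∀ k, Integrable (fun x => p x E) (hp.iterate ρ k) := fun k =>
    Integrable.of_mem_Icc 0 1 (hp.2.2.1 E hE).aemeasurable
      (ae_of_all _ fun x => ⟨hp.nonneg x hE, hp.le_one x hE⟩)
  have hstep : ∫ x, p x E ∂(hp.cesaro ρ m)
      = ((m : ℝ) + 1)⁻¹ * ∑ k ∈ Finset.range (m + 1), (hp.iterate ρ (k + 1)).real E := by
    rw [cesaro, integral_smul_measure, integral_finsetSum_measure fun k _ => hint k]
    simp [hp.integral_eq_comp_real _ hE, hp.iterate_succ, ENNReal.toReal_inv, ENNReal.toReal_add]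
  rw [hp.markovOp_measureReal _ hE, hstep, cesaro_real_apply, ← mul_sub, ← Finset.sum_sub_distrib,
    Finset.sum_range_sub fun k => (hp.iterate ρ k).real E]

lemma tendsto_markovOp_cesaro_sub (hp : IsTransFun p) (ρ : Measure X) [IsProbabilityMeasure ρ]
    {E : Set X} (hE : MeasurableSet E) :
    Tendsto (fun m => markovOp p (hp.cesaro ρ m).real E - (hp.cesaro ρ m).real E) atTop (𝓝 0) := by
  simp_rw [hp.markovOp_cesaro_sub ρ _ hE]
  refine squeeze_zero_norm (fun m => ?_) (tendsto_one_div_add_atTop_nhds_zero_nat (𝕜 := ℝ))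
  have hdiff : |(hp.iterate ρ (m + 1)).real E - (hp.iterate ρ 0).real E| ≤ 1 :=
    abs_sub_le_of_nonneg_of_le measureReal_nonneg measureReal_le_one measureReal_nonneg
      measureReal_le_one
  rw [Real.norm_eq_abs, abs_mul, abs_of_pos (by positivity), one_div]
  exact mul_le_of_le_one_right (by positivity) hdiff

lemma cesaro_real_eq_one (hp : IsTransFun p) {ρ : Measure X} [IsProbabilityMeasure ρ] {K : Set X}
    (hK : MeasurableSet K) (hKabs : ∀ x ∈ K, p x K = 1) (hρK : ρ K = 1) (m : ℕ) :
    (hp.cesaro ρ m).real K = 1 := by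
  simp_rw [cesaro_real_apply, measureReal_def, hp.iterate_apply_eq_one hK hKabs hρK]
  simp only [ENNReal.toReal_one, Finset.sum_const, Finset.card_range, nsmul_eq_mul, mul_one]
  push_cast
  exact inv_mul_cancel₀ (by positivity)

end IsTransFun

end TransitionKernel

section InvariantMeasures

variable {X : Type*} [MeasurableSpace X] {p : X → Set X → ℝ}

lemma mem_invProbSet_of_tendsto (hp : IsTransFun p) {ι : Type*} {l : Filter ι} [l.NeBot]
    {ν : ι → Set X → ℝ} {ν₀ : Set X → ℝ} (hν : ∀ i, IsFinAddProb (ν i))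
    (hinv : ∀ E, MeasurableSet E → Tendsto (fun i => markovOp p (ν i) E - ν i E) l (𝓝 0))
    (hlim : ∀ E, MeasurableSet E → Tendsto (fun i => ν i E) l (𝓝 (ν₀ E))) :
    ν₀ ∈ InvProbSet p := by
  have hν₀ := IsFinAddProb.of_tendsto hν hlim
  refine ⟨hν₀.finAdd, hν₀.nonneg, hν₀.univ_eq_one, fun E hE => tendsto_nhds_unique
    (tendsto_faIntegral hν hν₀ (hp.2.2.1 E hE) (fun x => hp.nonneg x hE)
      (fun x => hp.le_one x hE) hlim) ?_⟩
  have hsum := (hinv E hE).add (hlim E hE)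
  simp only [sub_add_cancel, zero_add] at hsum
  exact hsum

theorem isCtblAdd_of_unique_of_absorbing (hp : IsTransFun p) {K : Set X} (hK : MeasurableSet K)
    (hKabs : ∀ x ∈ K, p x K = 1) {x₀ : X} (hx₀ : x₀ ∈ K) {μ₀ : Set X → ℝ}
    (huniq : ∀ ν ∈ InvProbSet p, ν K = 1 → ν = μ₀) : IsCtblAdd μ₀ := by
  set σ := hp.cesaro (Measure.dirac x₀)
  have hδK : Measure.dirac x₀ K = 1 := by simp [Measure.dirac_apply' _ hK, hx₀]
  refine isCtblAdd_of_tendsto_measureReal (σ := σ) fun E _ =>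
    (tendsto_iff_ultrafilter _ _ _).2 fun U hU => ?_
  have hcluster := fun E => isCompact_Icc.ultrafilter_le_nhds (U.map fun m => (σ m).real E) (by
    rw [Ultrafilter.coe_map, le_principal_iff, mem_map]
    exact univ_mem' fun m => ⟨measureReal_nonneg, measureReal_le_one⟩)
  choose ν _ hν using hcluster
  have hνinv : ν ∈ InvProbSet p := mem_invProbSet_of_tendsto hp
    (fun m => isFinAddProb_measureReal (σ m))
    (fun E hE => (hp.tendsto_markovOp_cesaro_sub _ hE).mono_left hU) fun E _ => hν E
  have hνK : ν K = 1 := tendsto_nhds_unique (hν K)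
    (by simp only [σ, hp.cesaro_real_eq_one hK hKabs hδK, tendsto_const_nhds])
  exact huniq ν hνinv hνK ▸ hν E

end InvariantMeasures

section ConvexHull

lemma eq_of_mem_convexHull_of_apply_eq_zero {α ι : Type*} {μ : ι → α → ℝ}
    {S : ι → α} (hμS : ∀ i j, 0 ≤ μ i (S j)) (hS : ∀ i, μ i (S i) = 1) {ν : α → ℝ}
    (hν : ν ∈ convexHull ℝ (range μ)) {i : ι} (hzero : ∀ j, j ≠ i → ν (S j) = 0) : ν = μ i := by
  obtain ⟨κ, _, w, z, hw0, hw1, hz, rfl⟩ := mem_convexHull_iff_exists_fintype.1 hν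
  have hsupp : ∀ l, w l ≠ 0 → z l = μ i := by
    intro l hl
    obtain ⟨j, hj⟩ := hz l
    by_contra hne
    have hji : j ≠ i := fun h => hne (h ▸ hj.symm)
    have hterms := (Finset.sum_eq_zero_iff_of_nonneg fun l' _ => mul_nonneg (hw0 l')
      (by obtain ⟨j', hj'⟩ := hz l'; exact hj' ▸ hμS j' j)).1
      (by simpa using hzero j hji) l (Finset.mem_univ l)
    rw [← hj, hS j, mul_one] at hterms
    exact hl hterms
  calc ∑ l, w l • z l = ∑ l, w l • μ i := Finset.sum_congr rfl fun l _ => by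
        by_cases hl : w l = 0
        · simp [hl]
        · rw [hsupp l hl]
    _ = μ i := by rw [← Finset.sum_smul, hw1, one_smul]

variable {X : Type*} [MeasurableSpace X]

lemma exists_pairwise_disjoint_supports {ι : Type*} [Fintype ι] [DecidableEq ι]
    {μ : ι → Set X → ℝ} (hμ : ∀ i, IsFinAddProb (μ i))
    (hsing : ∀ i j, i ≠ j → ∃ Ki Kj : Set X, MeasurableSet Ki ∧ MeasurableSet Kj ∧
      Disjoint Ki Kj ∧ μ i Ki = 1 ∧ μ j Kj = 1) :
    ∃ S : ι → Set X, (∀ i, MeasurableSet (S i)) ∧ (∀ i, μ i (S i) = 1) ∧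
      Pairwise (Disjoint on S) := by
  choose! A B hA hB hAB hA1 hB1 using hsing
  have hT : ∀ i, ∀ j ∈ Finset.univ.erase i, MeasurableSet (A i j ∩ B j i) := fun i j hj =>
    (hA i j (Finset.ne_of_mem_erase hj).symm).inter (hB j i (Finset.ne_of_mem_erase hj))
  refine ⟨fun i => ⋂ j ∈ Finset.univ.erase i, A i j ∩ B j i,
    fun i => Finset.measurableSet_biInter _ (hT i),
    fun i => (hμ i).biInter_eq_one _ (hT i) fun j hj => ?_, fun i j hij => ?_⟩
  · have hji := Finset.ne_of_mem_erase hj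
    exact (hμ i).inter_eq_one (hA i j hji.symm) (hB j i hji) (hA1 i j hji.symm) (hB1 j i hji)
  · refine (hAB i j hij).mono ?_ ?_
    · exact (biInter_subset_of_mem (Finset.mem_erase.2 ⟨hij.symm, Finset.mem_univ j⟩)).trans
        inter_subset_left
    · exact (biInter_subset_of_mem (Finset.mem_erase.2 ⟨hij, Finset.mem_univ i⟩)).trans
        inter_subset_right

lemma convex_setOf_isCtblAdd : Convex ℝ {ν : Set X → ℝ | IsCtblAdd ν} := by
  intro ν hν ν' hν' a b _ _ _ E hE hd
  exact ((hν E hE hd).mul_left a).add ((hν' E hE hd).mul_left b)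

end ConvexHull

theorem theorem1_general {X : Type*} [MeasurableSpace X]
    (p : X → Set X → ℝ) (hp : IsTransFun p)
    (n : ℕ) (μ : Fin n → Set X → ℝ)
    (hbase : ∀ i, μ i ∈ InvProbSet p)
    (hhull : InvProbSet p = convexHull ℝ (Set.range μ))
    (hsing : ∀ i j, i ≠ j → ∃ Ki Kj : Set X, MeasurableSet Ki ∧ MeasurableSet Kj ∧
      Disjoint Ki Kj ∧ μ i Ki = 1 ∧ μ j Kj = 1)
    (halpha : ∀ i (Kmu : Set X), MeasurableSet Kmu → μ i Kmu = 1 →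
      ∃ K : Set X, MeasurableSet K ∧ K ⊆ Kmu ∧ μ i K = 1 ∧ ∀ x ∈ K, p x K = 1) :
    ∀ ν ∈ InvProbSet p, IsCtblAdd ν := by
  have hμ : ∀ i, IsFinAddProb (μ i) := fun i => isFinAddProb_of_mem_invProbSet (hbase i)
  obtain ⟨S, hSm, hS1, hSd⟩ := exists_pairwise_disjoint_supports hμ hsing
  have hctbl : ∀ i, IsCtblAdd (μ i) := by
    intro i
    obtain ⟨K, hKm, hKS, hK1, hKabs⟩ := halpha i (S i) (hSm i) (hS1 i)
    obtain ⟨x₀, hx₀⟩ := (hμ i).nonempty_of_eq_one hK1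
    refine isCtblAdd_of_unique_of_absorbing hp hKm hKabs hx₀ fun ν hν hνK =>
      eq_of_mem_convexHull_of_apply_eq_zero (fun j k => (hμ j).nonneg _ (hSm k)) hS1
        (hhull ▸ hν) fun j hji => ?_
    exact (isFinAddProb_of_mem_invProbSet hν).apply_eq_zero_of_disjoint hKm (hSm j) hνK
      ((hSd hji).mono_right hKS)
  intro ν hν
  exact convexHull_min (range_subset_iff.2 hctbl) convex_setOf_isCtblAdd (hhull ▸ hν)

/-- Theorem 1: if `Δ_ba` has finite dimension `n`, is the convex hull of `n` pairwise
singular measures each satisfying condition (α), then every invariant finitely additive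
probability measure is countably additive. -/
theorem theorem1 {X : Type*} [MeasurableSpace X]
    (hsingl : ∀ x : X, MeasurableSet ({x} : Set X))
    (p : X → Set X → ℝ) (hp : IsTransFun p)
    (n : ℕ) (hn : 0 < n) (μ : Fin n → Set X → ℝ)
    (hbase : ∀ i, μ i ∈ InvProbSet p)
    (hdim : Module.finrank ℝ (Submodule.span ℝ (InvProbSet p)) = n)
    (hhull : InvProbSet p = convexHull ℝ (Set.range μ))
    (hsing : ∀ i j, i ≠ j → ∃ Ki Kj : Set X, MeasurableSet Ki ∧ MeasurableSet Kj ∧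
      Disjoint Ki Kj ∧ μ i Ki = 1 ∧ μ j Kj = 1)
    (halpha : ∀ i (Kmu : Set X), MeasurableSet Kmu → μ i Kmu = 1 →
      ∃ K : Set X, MeasurableSet K ∧ K ⊆ Kmu ∧ μ i K = 1 ∧ ∀ x ∈ K, p x K = 1) :
    ∀ ν ∈ InvProbSet p, IsCtblAdd ν :=
  theorem1_general p hp n μ hbase hhull hsing halpha
end

section
/- n-step transition probabilities of CM1: for every x₀ ∈ (0,1) and every n ≥ 1, pⁿ(x₀,{x₀^{2ⁿ}}) = x₀^{2ⁿ−1} and pⁿ(x₀,{0}) = 1 − x₀^{2ⁿ−1}, and pⁿ(x₀, E) = 0 for every Borel set E disjoint from {0, x₀^{2ⁿ}}. -/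
open MeasureTheory Set Filter Topology Function

/-- The Dirac measure at `y`, as a set function. -/
noncomputable def diracSF (y : ℝ) (E : Set ℝ) : ℝ := E.indicator (fun _ => (1:ℝ)) y

/-- The transition function of CM1: `p(x,·) = x·δ_{x²} + (1-x)·δ₀` on `(0,1)`,
`p(0,·) = δ₀`, `p(1,·) = δ₁` (the formula below specializes correctly at `0` and `1`). -/
noncomputable def p1 (x : ℝ) (E : Set ℝ) : ℝ :=
  x * diracSF (x ^ 2) E + (1 - x) * diracSF 0 E

/-- The transition function of CM2: `p(x,·) = (1-x)·δ_{x²} + x·δ₀` on `(0,1)`,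
`p(0,·) = δ₀`, `p(1,·) = δ₁`. -/
noncomputable def p2 (x : ℝ) (E : Set ℝ) : ℝ :=
  if x = 1 then diracSF 1 E else (1 - x) * diracSF (x ^ 2) E + x * diracSF 0 E

/-- The transition function of CM3: the CM1 rule on `[0,1/2]`, the CM2 rule on `(1/2,1)`,
`p(1,·) = δ₁`. -/
noncomputable def p3 (x : ℝ) (E : Set ℝ) : ℝ :=
  if x = 1 then diracSF 1 E
  else if x ≤ 1 / 2 then x * diracSF (x ^ 2) E + (1 - x) * diracSF 0 E
  else (1 - x) * diracSF (x ^ 2) E + x * diracSF 0 E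

/-- The `n`-step transition function of CM1 (`p1n 0` is the identity kernel, and
`p1n (n+1) x E = ∫ p1n n (y,E) p(x,dy)` is the integral convolution). -/
noncomputable def p1n : ℕ → ℝ → Set ℝ → ℝ
  | 0 => fun x E => diracSF x E
  | n + 1 => fun x E => faIntegral (p1 x) fun y => p1n n y E

/-- The `n`-step transition function of CM2. -/
noncomputable def p2n : ℕ → ℝ → Set ℝ → ℝ
  | 0 => fun x E => diracSF x E
  | n + 1 => fun x E => faIntegral (p2 x) fun y => p2n n y E

/-- The `n`-step transition function of CM3. -/
noncomputable def p3n : ℕ → ℝ → Set ℝ → ℝ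
  | 0 => fun x E => diracSF x E
  | n + 1 => fun x E => faIntegral (p3 x) fun y => p3n n y E

/-!
From `x` the chain moves to `x²` with probability `x` and is absorbed at `0` otherwise, so each
one-step kernel has two atoms, and for such a set function the layer-cake integral is just the
weighted sum of the two values. By induction the chain started at `x` sits at `x^{2ⁿ}` with
probability `x · x² ⋯ x^{2ⁿ⁻¹} = x^{2ⁿ-1}` and at `0` otherwise.
-/

lemma integral_Ioi_indicator_Iio (c : ℝ) :
    ∫ t in Ioi (0 : ℝ), (Iio c).indicator 1 t = c⁺ := by
  rw [integral_indicator_one measurableSet_Iio, Measure.real_def,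
    Measure.restrict_apply measurableSet_Iio, Iio_inter_Ioi, Real.volume_Ioo,
    ENNReal.toReal_ofReal', sub_zero, posPart_def]

lemma integrableOn_Ioi_indicator_Iio (c : ℝ) :
    IntegrableOn ((Iio c).indicator (1 : ℝ → ℝ)) (Ioi 0) := by
  refine (integrable_indicator_iff measurableSet_Iio).2 (integrableOn_const ?_)
  rw [Measure.restrict_apply measurableSet_Iio, Iio_inter_Ioi, Real.volume_Ioo]
  exact ENNReal.ofReal_ne_top

lemma diracSF_setOf_lt (u t : ℝ) (g : ℝ → ℝ) :
    diracSF u {x | t < g x} = (Iio (g u)).indicator 1 t := by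
  by_cases h : t < g u <;> simp [diracSF, h]

lemma faIntegral_add_diracSF (a b u v : ℝ) (f : ℝ → ℝ) :
    faIntegral (fun E => a * diracSF u E + b * diracSF v E) f = a * f u + b * f v := by
  have layer (g : ℝ → ℝ) :
      ∫ t in Ioi (0 : ℝ), a * diracSF u {x | t < g x} + b * diracSF v {x | t < g x} =
        a * (g u)⁺ + b * (g v)⁺ := by
    simp_rw [diracSF_setOf_lt]
    rw [integral_add ((integrableOn_Ioi_indicator_Iio _).const_mul a)
      ((integrableOn_Ioi_indicator_Iio _).const_mul b), integral_const_mul, integral_const_mul,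
      integral_Ioi_indicator_Iio, integral_Ioi_indicator_Iio]
  have neg_layer (t : ℝ) : {x | f x < -t} = {x | t < -f x} := by
    ext; exact lt_neg (α := ℝ)
  simp_rw [faIntegral, neg_layer, layer, posPart_neg]
  linear_combination a * posPart_sub_negPart (f u) + b * posPart_sub_negPart (f v)

lemma p1n_succ (n : ℕ) (x : ℝ) (E : Set ℝ) :
    p1n (n + 1) x E = x * p1n n (x ^ 2) E + (1 - x) * p1n n 0 E :=
  faIntegral_add_diracSF _ _ _ _ _

lemma p1n_zero_left (n : ℕ) (E : Set ℝ) : p1n n 0 E = diracSF 0 E := by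
  induction n with
  | zero => rfl
  | succ n ih => rw [p1n_succ, ih]; ring

lemma p1n_eq (n : ℕ) (x : ℝ) (E : Set ℝ) :
    p1n n x E =
      x ^ (2 ^ n - 1) * diracSF (x ^ 2 ^ n) E + (1 - x ^ (2 ^ n - 1)) * diracSF 0 E := by
  induction n generalizing x with
  | zero => simp [p1n]
  | succ n ih =>
    have hmass : x * (x ^ 2) ^ (2 ^ n - 1) = x ^ (2 ^ (n + 1) - 1) := by
      rw [← pow_mul, ← pow_succ']
      congr 1
      have := Nat.one_le_two_pow (n := n)
      rw [pow_succ]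
      omega
    have hpos : (x ^ 2) ^ 2 ^ n = x ^ 2 ^ (n + 1) := by rw [← pow_mul, pow_succ, mul_comm]
    rw [p1n_succ, ih, p1n_zero_left, hpos, ← hmass]
    ring

theorem cm1_nstep_general (x₀ : ℝ) (hx : x₀ ∈ Set.Ioo (0:ℝ) 1) (n : ℕ) :
    p1n n x₀ {x₀ ^ (2 ^ n)} = x₀ ^ (2 ^ n - 1) ∧
    p1n n x₀ {0} = 1 - x₀ ^ (2 ^ n - 1) ∧
    ∀ E : Set ℝ, MeasurableSet E → Disjoint E ({0, x₀ ^ (2 ^ n)} : Set ℝ) →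
      p1n n x₀ E = 0 := by
  have hne : x₀ ^ 2 ^ n ≠ 0 := pow_ne_zero _ hx.1.ne'
  simp_rw [p1n_eq]
  refine ⟨by simp [diracSF, hne], by simp [diracSF, hne.symm], fun E _ hdisj => ?_⟩
  have h0 : (0 : ℝ) ∉ E := fun h => disjoint_left.1 hdisj h (mem_insert _ _)
  have hpt : x₀ ^ 2 ^ n ∉ E := fun h => disjoint_left.1 hdisj h (mem_insert_of_mem _ rfl)
  simp [diracSF, h0, hpt]

/-- The `n`-step transition probabilities of CM1: starting from `x₀ ∈ (0,1)`, the `n`-th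
Markov measure puts mass `x₀^{2ⁿ-1}` at `x₀^{2ⁿ}`, mass `1 - x₀^{2ⁿ-1}` at `0`, and
vanishes on Borel sets disjoint from these two atoms. -/
theorem cm1_nstep (x₀ : ℝ) (hx : x₀ ∈ Set.Ioo (0:ℝ) 1) (n : ℕ) (hn : 1 ≤ n) :
    p1n n x₀ {x₀ ^ (2 ^ n)} = x₀ ^ (2 ^ n - 1) ∧
    p1n n x₀ {0} = 1 - x₀ ^ (2 ^ n - 1) ∧
    ∀ E : Set ℝ, MeasurableSet E → Disjoint E ({0, x₀ ^ (2 ^ n)} : Set ℝ) →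
      p1n n x₀ E = 0 :=
  cm1_nstep_general x₀ hx n
end

section
/- If μ is a finitely additive probability measure on the Borel σ-algebra of [0,1] that is invariant for CM1 (Aμ = μ) and satisfies μ((0,1)) = 1, then ∫_{(0,1)} (1−x) μ(dx) = 0. -/
open MeasureTheory Set Filter Topology Function

/-! The layer-cake integral only sees superlevel and sublevel sets, and a nonnegative finitely
additive probability measure carried by `(0,1)` gives equal mass to measurable sets that agree on
`(0,1)`. Since `p(x, {0}) = 1 - x`, the integrand agrees on `(0,1)` with `x ↦ p(x, {0})`, whose
integral is `μ {0}` by invariance, and `μ {0} = 0` because `{0}` misses `(0,1)`. -/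

section FinitelyAdditive

variable {X : Type*} [MeasurableSpace X] {μ : Set X → ℝ} {S : Set X}

theorem IsFinAdd.eq_zero_of_disjoint (hfa : IsFinAdd μ) (hpos : IsNonnegSF μ)
    (hS : MeasurableSet S) (hSuniv : μ S = μ univ) {E : Set X} (hE : MeasurableSet E)
    (hES : Disjoint E S) : μ E = 0 := by
  have hEuS : MeasurableSet (E ∪ S) := hE.union hS
  have hunion : μ (E ∪ S) = μ E + μ S := hfa.2 E S hE hS hES
  have htotal : μ univ = μ (E ∪ S) + μ (E ∪ S)ᶜ := by
    rw [← hfa.2 _ _ hEuS hEuS.compl disjoint_compl_right, union_compl_self]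
  linarith [hpos E hE, hpos _ hEuS.compl]

theorem IsFinAdd.congr_of_inter_eq (hfa : IsFinAdd μ) (hS : MeasurableSet S)
    (hnull : ∀ E, MeasurableSet E → Disjoint E S → μ E = 0) {A B : Set X}
    (hA : MeasurableSet A) (hB : MeasurableSet B) (hAB : S ∩ A = S ∩ B) : μ A = μ B := by
  have hsplit : ∀ C, MeasurableSet C → μ C = μ (S ∩ C) := fun C hC => by
    conv_lhs => rw [← inter_union_sdiff C S]
    rw [hfa.2 _ _ (hC.inter hS) (hC.diff hS) disjoint_sdiff_inter.symm,
      hnull _ (hC.diff hS) disjoint_sdiff_left, add_zero, inter_comm]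
  rw [hsplit A hA, hsplit B hB, hAB]

theorem faIntegral_congr_of_eqOn (hfa : IsFinAdd μ) (hS : MeasurableSet S)
    (hnull : ∀ E, MeasurableSet E → Disjoint E S → μ E = 0) {f g : X → ℝ}
    (hf : Measurable f) (hg : Measurable g) (hfg : EqOn f g S) :
    faIntegral μ f = faIntegral μ g := by
  have hlevel : ∀ T : Set ℝ, MeasurableSet T → μ (f ⁻¹' T) = μ (g ⁻¹' T) := fun T hT =>
    hfa.congr_of_inter_eq hS hnull (hf hT) (hg hT) (hfg.inter_preimage_eq T)
  have hupper : ∀ t : ℝ, μ {x | t < f x} = μ {x | t < g x} := fun t =>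
    hlevel (Ioi t) measurableSet_Ioi
  have hlower : ∀ t : ℝ, μ {x | f x < -t} = μ {x | g x < -t} := fun t =>
    hlevel (Iio (-t)) measurableSet_Iio
  simp only [faIntegral, hupper, hlower]

end FinitelyAdditive

theorem p1_singleton_zero (x : ℝ) : p1 x {0} = 1 - x := by
  by_cases hx : x = 0 <;> simp [p1, diracSF, hx]

theorem cm1_invariance_equation_general (μ : Set ℝ → ℝ)
    (hfa : IsFinAdd μ) (hpos : IsNonnegSF μ) (hprob : μ Set.univ = 1)
    (hIoo : μ (Set.Ioo 0 1) = 1)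
    (hinv : ∀ E : Set ℝ, MeasurableSet E → faIntegral μ (fun x => p1 x E) = μ E) :
    faIntegral μ ((Set.Ioo (0:ℝ) 1).indicator fun x => 1 - x) = 0 := by
  have hnull : ∀ E, MeasurableSet E → Disjoint E (Ioo (0:ℝ) 1) → μ E = 0 := fun E hE =>
    hfa.eq_zero_of_disjoint hpos measurableSet_Ioo (hIoo.trans hprob.symm) hE
  calc faIntegral μ ((Ioo (0:ℝ) 1).indicator fun x => 1 - x)
      = faIntegral μ (fun x => p1 x {0}) := by
        simp only [p1_singleton_zero]
        exact faIntegral_congr_of_eqOn hfa measurableSet_Ioo hnull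
          ((measurable_const.sub measurable_id).indicator measurableSet_Ioo)
          (measurable_const.sub measurable_id) fun x hx => indicator_of_mem hx _
    _ = μ {0} := hinv {0} (measurableSet_singleton 0)
    _ = 0 := hnull {0} (measurableSet_singleton 0) (by simp)

/-- If `μ` is a finitely additive probability measure on the Borel σ-algebra of `[0,1]`
invariant for CM1 and `μ((0,1)) = 1`, then `∫_{(0,1)} (1-x) μ(dx) = 0`. -/
theorem cm1_invariance_equation (μ : Set ℝ → ℝ)
    (hfa : IsFinAdd μ) (hpos : IsNonnegSF μ) (hprob : μ Set.univ = 1)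
    (hIcc : μ (Set.Icc 0 1) = 1) (hIoo : μ (Set.Ioo 0 1) = 1)
    (hinv : ∀ E : Set ℝ, MeasurableSet E → faIntegral μ (fun x => p1 x E) = μ E) :
    faIntegral μ ((Set.Ioo (0:ℝ) 1).indicator fun x => 1 - x) = 0 :=
  cm1_invariance_equation_general μ hfa hpos hprob hIoo hinv
end

section
/- Localization of solutions of the invariance equation for CM1: if μ is a finitely additive probability measure on the Borel σ-algebra of [0,1] with μ((0,1)) = 1 and ∫_{(0,1)} (1−x) μ(dx) = 0, then (i) μ([a,b]) = 0 for every closed interval [a,b] ⊂ (0,1); (ii) μ((ε,1)) = 1 and μ((0,ε)) = 0 for every ε ∈ (0,1); (iii) μ is purely finitely additive (in particular, μ is not countably additive). -/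
open MeasureTheory Set Filter Topology Function

/-!
By the layer-cake formula, `∫_{(0,1)} (1-x) μ(dx) = ∫_0^∞ μ((0,1-t)) dt`. The integrand is
nonnegative and antitone in `t`, so a vanishing integral forces it to vanish for every `t > 0`:
`μ((0,ε)) = 0` for all `ε < 1`, and (i), (ii) follow by monotonicity and finite additivity.
The interval `(0,1)` is the countable union of the `μ`-null sets `(0, 1 - 1/(n+1))` and its
complement is `μ`-null, so a countably additive `λ ≤ μ` vanishes on all of them, hence
everywhere.
-/

section SetFunction

variable {X : Type*} [MeasurableSpace X] {μ : Set X → ℝ}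

namespace IsFinAdd

lemma mono (hfa : IsFinAdd μ) (hpos : IsNonnegSF μ) {E F : Set X}
    (hE : MeasurableSet E) (hF : MeasurableSet F) (hEF : E ⊆ F) : μ E ≤ μ F := by
  have h := hfa.2 E (F \ E) hE (hF.diff hE) disjoint_sdiff_self_right
  rw [union_sdiff_cancel hEF] at h
  linarith [hpos _ (hF.diff hE)]

lemma eq_zero_of_subset (hfa : IsFinAdd μ) (hpos : IsNonnegSF μ) {E F : Set X}
    (hE : MeasurableSet E) (hF : MeasurableSet F) (hEF : E ⊆ F) (hF0 : μ F = 0) : μ E = 0 :=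
  le_antisymm ((hfa.mono hpos hE hF hEF).trans_eq hF0) (hpos E hE)

lemma add_compl (hfa : IsFinAdd μ) {E : Set X} (hE : MeasurableSet E) :
    μ E + μ Eᶜ = μ univ := by
  rw [← hfa.2 E Eᶜ hE hE.compl disjoint_compl_right, union_compl_self]

end IsFinAdd

lemma IsCtblAdd.iUnion_eq_zero (hca : IsCtblAdd μ) (hfa : IsFinAdd μ) (hpos : IsNonnegSF μ)
    {S : ℕ → Set X} (hS : ∀ n, MeasurableSet (S n)) (hS0 : ∀ n, μ (S n) = 0) :
    μ (⋃ n, S n) = 0 := by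
  have hD : (fun n => μ (disjointed S n)) = 0 := funext fun n =>
    hfa.eq_zero_of_subset hpos (.disjointed hS n) (hS n) (disjointed_subset S n) (hS0 n)
  have h := hca _ (.disjointed hS) (disjoint_disjointed S)
  rw [iUnion_disjointed, hD] at h
  exact h.unique hasSum_zero

lemma isPurelyFinAdd_of_null_cover {S : ℕ → Set X} (hS : ∀ n, MeasurableSet (S n))
    (hS0 : ∀ n, μ (S n) = 0) (hcompl : μ (⋃ n, S n)ᶜ = 0) :
    IsPurelyFinAdd μ := by
  intro lam hlfa hlca hlpos hle E hE
  have hU : MeasurableSet (⋃ n, S n) := .iUnion hS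
  have hlamS : ∀ n, lam (S n) = 0 := fun n =>
    le_antisymm ((hle _ (hS n)).trans_eq (hS0 n)) (hlpos _ (hS n))
  have hlamU : lam (⋃ n, S n) = 0 := hlca.iUnion_eq_zero hlfa hlpos hS hlamS
  have hlamC : lam (⋃ n, S n)ᶜ = 0 :=
    le_antisymm ((hle _ hU.compl).trans_eq hcompl) (hlpos _ hU.compl)
  have hlamUniv : lam univ = 0 := by rw [← hlfa.add_compl hU, hlamU, hlamC, add_zero]
  exact hlfa.eq_zero_of_subset hlpos hE .univ (subset_univ E) hlamUniv

lemma IsPurelyFinAdd.not_isCtblAdd (hpfa : IsPurelyFinAdd μ) (hfa : IsFinAdd μ)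
    (hpos : IsNonnegSF μ) (huniv : μ univ ≠ 0) : ¬ IsCtblAdd μ := fun hca =>
  huniv (hpfa μ hfa hca hpos (fun _ _ => le_rfl) univ .univ)

lemma faIntegral_of_nonneg (hμ : μ ∅ = 0) {f : X → ℝ} (hf : ∀ x, 0 ≤ f x) :
    faIntegral μ f = ∫ t in Ioi 0, μ {x | t < f x} := by
  have hneg : ∀ t ∈ Ioi (0:ℝ), μ {x | f x < -t} = 0 := fun t ht => by
    have : {x | f x < -t} = ∅ := eq_empty_of_forall_notMem fun x (hx : f x < -t) => by
      linarith [hf x, mem_Ioi.1 ht]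
    rw [this, hμ]
  rw [faIntegral, setIntegral_congr_fun measurableSet_Ioi hneg, integral_zero, sub_zero]

end SetFunction

lemma Antitone.integrableOn_Ioi_of_eq_zero {g : ℝ → ℝ} (hg : Antitone g) {a b : ℝ}
    (hb : ∀ t, b ≤ t → g t = 0) : IntegrableOn g (Ioi a) := by
  have hIcc : IntegrableOn g (Icc a b) := hg.locallyIntegrable.integrableOn_isCompact isCompact_Icc
  have hIci : IntegrableOn g (Ici b) :=
    integrableOn_zero.congr_fun (fun t ht => (hb t ht).symm) measurableSet_Ici
  exact (hIcc.union hIci).mono_set fun t ht => (le_total t b).imp (fun h => ⟨ht.out.le, h⟩) id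

lemma Antitone.eq_zero_of_setIntegral_Ioi_eq_zero {g : ℝ → ℝ} (hg : Antitone g)
    (hg0 : 0 ≤ g) {a : ℝ} (hint : IntegrableOn g (Ioi a)) (h : ∫ t in Ioi a, g t = 0)
    {t : ℝ} (ht : a < t) : g t = 0 := by
  have hae : g =ᵐ[volume.restrict (Ioi a)] 0 := (integral_eq_zero_iff_of_nonneg hg0 hint).mp h
  have hae' : ∀ᵐ s ∂volume.restrict (Ioo a t), g s = 0 :=
    ae_restrict_of_ae_restrict_of_subset Ioo_subset_Ioi_self hae
  have : (ae (volume.restrict (Ioo a t))).NeBot := ae_neBot.mpr (by simp [ht])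
  obtain ⟨s, hs0, hs⟩ := (hae'.and (ae_restrict_mem measurableSet_Ioo)).exists
  exact le_antisymm ((hg hs.2.le).trans_eq hs0) (hg0 t)

lemma setOf_lt_indicator_Ioo_one_sub {t : ℝ} (ht : 0 < t) :
    {x : ℝ | t < (Ioo (0:ℝ) 1).indicator (fun x => 1 - x) x} = Ioo 0 (1 - t) := by
  ext x
  by_cases hx : x ∈ Ioo (0:ℝ) 1
  · simp only [mem_ofPred_eq, indicator_of_mem hx, mem_Ioo]
    constructor
    · intro h; exact ⟨hx.1, by linarith⟩
    · intro h; linarith [h.2]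
  · simp only [mem_ofPred_eq, indicator_of_notMem hx, mem_Ioo]
    simp only [mem_Ioo, not_and, not_lt] at hx
    constructor
    · intro h; linarith
    · intro h; linarith [hx h.1, h.2]

theorem measure_Ioo_zero_eq_zero_of_faIntegral_eq_zero {μ : Set ℝ → ℝ} (hfa : IsFinAdd μ)
    (hpos : IsNonnegSF μ) (hint : faIntegral μ ((Ioo (0:ℝ) 1).indicator fun x => 1 - x) = 0)
    {ε : ℝ} (hε : ε < 1) : μ (Ioo 0 ε) = 0 := by
  set g : ℝ → ℝ := fun t => μ (Ioo 0 (1 - t))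
  have hg : Antitone g := fun s t hst =>
    hfa.mono hpos measurableSet_Ioo measurableSet_Ioo (Ioo_subset_Ioo_right (by linarith))
  have hg1 : ∀ t, 1 ≤ t → g t = 0 := fun t ht => by
    simp only [g, Ioo_eq_empty (by linarith : ¬ (0:ℝ) < 1 - t), hfa.1]
  have hf0 : ∀ x, 0 ≤ (Ioo (0:ℝ) 1).indicator (fun x => 1 - x) x :=
    indicator_nonneg fun x hx => by linarith [hx.2]
  have hgint : ∫ t in Ioi 0, g t = 0 := by
    rw [faIntegral_of_nonneg hfa.1 hf0,
      setIntegral_congr_fun measurableSet_Ioi fun t ht => by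
        rw [setOf_lt_indicator_Ioo_one_sub ht]] at hint
    exact hint
  have h := hg.eq_zero_of_setIntegral_Ioi_eq_zero (fun t => hpos _ measurableSet_Ioo)
    (hg.integrableOn_Ioi_of_eq_zero hg1) hgint (sub_pos.2 hε)
  simpa [g] using h

lemma iUnion_Ioo_sub_one_div (a b : ℝ) : ⋃ n : ℕ, Ioo a (b - 1 / (n + 1)) = Ioo a b := by
  ext x
  simp only [mem_iUnion, mem_Ioo]
  constructor
  · rintro ⟨n, hax, hxb⟩
    exact ⟨hax, hxb.trans (sub_lt_self b Nat.one_div_pos_of_nat)⟩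
  · rintro ⟨hax, hxb⟩
    obtain ⟨n, hn⟩ := exists_nat_one_div_lt (sub_pos.2 hxb)
    exact ⟨n, hax, by linarith⟩

theorem cm1_localization_general (μ : Set ℝ → ℝ)
    (hfa : IsFinAdd μ) (hpos : IsNonnegSF μ) (hprob : μ Set.univ = 1)
    (hIoo : μ (Set.Ioo 0 1) = 1)
    (hint : faIntegral μ ((Set.Ioo (0:ℝ) 1).indicator fun x => 1 - x) = 0) :
    (∀ a b : ℝ, 0 < a → a ≤ b → b < 1 → μ (Set.Icc a b) = 0) ∧
    (∀ ε ∈ Set.Ioo (0:ℝ) 1, μ (Set.Ioo ε 1) = 1 ∧ μ (Set.Ioo 0 ε) = 0) ∧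
    IsPurelyFinAdd μ ∧ ¬ IsCtblAdd μ := by
  have hnull : ∀ ε < 1, μ (Ioo 0 ε) = 0 := fun ε hε =>
    measure_Ioo_zero_eq_zero_of_faIntegral_eq_zero hfa hpos hint hε
  have hIoc : ∀ b < 1, μ (Ioc 0 b) = 0 := fun b hb =>
    hfa.eq_zero_of_subset hpos measurableSet_Ioc measurableSet_Ioo
      (Ioc_subset_Ioo_right (by linarith : b < (b + 1) / 2)) (hnull _ (by linarith))
  have hpfa : IsPurelyFinAdd μ := by
    refine isPurelyFinAdd_of_null_cover (S := fun n : ℕ => Ioo 0 (1 - 1 / (n + 1)))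
      (fun n => measurableSet_Ioo) (fun n => hnull _ (sub_lt_self 1 Nat.one_div_pos_of_nat)) ?_
    rw [iUnion_Ioo_sub_one_div]
    linarith [hfa.add_compl (measurableSet_Ioo (a := (0:ℝ)) (b := 1))]
  refine ⟨fun a b ha _ hb => ?_, fun ε hε => ⟨?_, hnull ε hε.2⟩, hpfa,
    hpfa.not_isCtblAdd hfa hpos (by simp [hprob])⟩
  · exact hfa.eq_zero_of_subset hpos measurableSet_Icc measurableSet_Ioc
      (fun x hx => ⟨ha.trans_le hx.1, hx.2⟩) (hIoc b hb)
  · have h := hfa.2 (Ioc 0 ε) (Ioo ε 1) measurableSet_Ioc measurableSet_Ioo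
      (disjoint_left.2 fun x hx hx' => by linarith [hx.2, hx'.1])
    rw [Ioc_union_Ioo_eq_Ioo hε.1.le hε.2, hIoo, hIoc ε hε.2] at h
    linarith

/-- Localization of solutions of the invariance equation for CM1: if `μ((0,1)) = 1` and
`∫_{(0,1)} (1-x) μ(dx) = 0` then (i) `μ([a,b]) = 0` for every `[a,b] ⊂ (0,1)`;
(ii) `μ((ε,1)) = 1` and `μ((0,ε)) = 0` for every `ε ∈ (0,1)`; (iii) `μ` is purely
finitely additive, in particular not countably additive. -/
theorem cm1_localization (μ : Set ℝ → ℝ)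
    (hfa : IsFinAdd μ) (hpos : IsNonnegSF μ) (hprob : μ Set.univ = 1)
    (hIcc : μ (Set.Icc 0 1) = 1) (hIoo : μ (Set.Ioo 0 1) = 1)
    (hint : faIntegral μ ((Set.Ioo (0:ℝ) 1).indicator fun x => 1 - x) = 0) :
    (∀ a b : ℝ, 0 < a → a ≤ b → b < 1 → μ (Set.Icc a b) = 0) ∧
    (∀ ε ∈ Set.Ioo (0:ℝ) 1, μ (Set.Ioo ε 1) = 1 ∧ μ (Set.Ioo 0 ε) = 0) ∧
    IsPurelyFinAdd μ ∧ ¬ IsCtblAdd μ :=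
  cm1_localization_general μ hfa hpos hprob hIoo hint
end
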